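/- arXiv:0902.0054 — 6 statements merged into one kernel-verified Lean document; each statement's English description precedes it below -/
import Mathlib

section
/- For every real λ > 0 and every real z > 2, ∫_{-2}^{2} (z-x)^{-λ} (4-x²)^{λ-1/2} dx = 4^{2λ} (Γ(λ+1/2)²/Γ(2λ+1)) · G(z)^{λ}, where G(z) = (z - √(z²-4))/2. In particular, the generalized Cauchy–Stieltjes transform of index λ of the (unnormalized) symmetric Beta density (4-x²)^{λ-1/2} on [-2,2] equals a constant times the λ-th power of the Cauchy–Stieltjes transform of the Wigner semicircle law. -/
/-!
Substituting `x = 2c` and writing `z = g + 1/g` with `g = G(z) ∈ (0, 1)` turns the integral into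
`2 · 4^(λ-1/2) · g^λ · ∫_{-1}^{1} (1 - c²)^(λ-1/2) (1 - 2gc + g²)^(-λ) dc`.
This last integral does not depend on `g`: the Möbius substitution `c = (v + g)/(1 + gv)`,
averaging with the reflection `v ↦ -v`, and the substitution `w = √(1 - g²) v / √(1 - g²v²)`
turn it into `∫_{-1}^{1} (1 - w²)^(λ-1/2) dw`, a Beta integral equal to
`2^(2λ) Γ(λ + 1/2)² / Γ(2λ + 1)`.
-/

open Real Set MeasureTheory

theorem integral_rpow_mul_one_sub_rpow {a b : ℝ} (ha : 0 < a) (hb : 0 < b) :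
    ∫ t in (0 : ℝ)..1, t ^ (a - 1) * (1 - t) ^ (b - 1) = Gamma a * Gamma b / Gamma (a + b) := by
  have h := Complex.betaIntegral_eq_Gamma_mul_div a b (by simpa) (by simpa)
  rw [Complex.betaIntegral, ← Complex.ofReal_add, Complex.Gamma_ofReal, Complex.Gamma_ofReal,
    Complex.Gamma_ofReal] at h
  rw [← Complex.ofReal_inj]
  push_cast
  rw [← h, ← intervalIntegral.integral_ofReal]
  refine intervalIntegral.integral_congr fun t ht => ?_
  rw [uIcc_of_le zero_le_one] at ht
  push_cast
  rw [Complex.ofReal_cpow ht.1, Complex.ofReal_cpow (sub_nonneg.2 ht.2)]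
  push_cast; rfl

theorem integral_one_sub_sq_rpow {a : ℝ} (ha : 0 < a) :
    ∫ x in (-1 : ℝ)..1, (1 - x ^ 2) ^ (a - 1) =
      2 ^ (2 * a - 1) * (Gamma a ^ 2 / Gamma (2 * a)) := by
  have h := intervalIntegral.integral_comp_mul_add (a := 0) (b := 1)
    (fun x : ℝ => (1 - x ^ 2) ^ (a - 1)) two_ne_zero (-1)
  norm_num at h
  have hbeta : ∫ t in (0 : ℝ)..1, (1 - (2 * t + -1) ^ 2) ^ (a - 1)
      = 4 ^ (a - 1) * ∫ t in (0 : ℝ)..1, t ^ (a - 1) * (1 - t) ^ (a - 1) := by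
    rw [← intervalIntegral.integral_const_mul]
    refine intervalIntegral.integral_congr fun t ht => ?_
    rw [uIcc_of_le zero_le_one] at ht
    have ht' : 0 ≤ 1 - t := sub_nonneg.2 ht.2
    rw [show 1 - (2 * t + -1) ^ 2 = 4 * (t * (1 - t)) by ring,
      mul_rpow zero_le_four (mul_nonneg ht.1 ht'), mul_rpow ht.1 ht']
  have h4 : (4 : ℝ) ^ (a - 1) = 2 ^ (2 * a - 1) / 2 := by
    rw [show (4 : ℝ) = 2 ^ (2 : ℝ) by norm_num, ← rpow_mul zero_le_two,
      show 2 * a - 1 = 2 * (a - 1) + 1 by ring, rpow_add_one two_ne_zero]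
    ring
  rw [hbeta, integral_rpow_mul_one_sub_rpow ha ha, h4, ← two_mul] at h
  rw [sq]
  linear_combination -2 * h

theorem intervalIntegrable_one_sub_sq_rpow {s : ℝ} (hs : -1 < s) :
    IntervalIntegrable (fun x : ℝ => (1 - x ^ 2) ^ s) volume (-1) 1 := by
  have hright : IntervalIntegrable (fun x : ℝ => (1 - x ^ 2) ^ s) volume 0 1 := by
    have h1 : IntervalIntegrable (fun x : ℝ => (1 - x) ^ s) volume 0 1 := by
      simpa using
        ((intervalIntegral.intervalIntegrable_rpow' hs (a := 0) (b := 1)).comp_sub_left 1).symm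
    have h2 : ContinuousOn (fun x : ℝ => (1 + x) ^ s) (uIcc 0 1) := by
      rw [uIcc_of_le zero_le_one]
      exact ContinuousOn.rpow_const (by fun_prop) fun x hx => Or.inl (by linarith [hx.1])
    refine (h1.mul_continuousOn h2).congr fun x hx => ?_
    rw [uIoc_of_le zero_le_one] at hx
    rw [← mul_rpow (by linarith [hx.2]) (by linarith [hx.1])]
    ring_nf
  have hleft : IntervalIntegrable (fun x : ℝ => (1 - x ^ 2) ^ s) volume (-1) 0 := by
    simpa using ((IntervalIntegrable.iff_comp_neg).mp hright).symm
  exact hleft.trans hright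

theorem intervalIntegral.integral_eq_integral_even_part {E : Type*} [NormedAddCommGroup E]
    [NormedSpace ℝ E] {f : ℝ → E} {a : ℝ} (hf : IntervalIntegrable f volume (-a) a) :
    ∫ x in -a..a, f x = ∫ x in -a..a, (2 : ℝ)⁻¹ • (f x + f (-x)) := by
  have hneg : ∫ x in -a..a, f (-x) = ∫ x in -a..a, f x := by
    simp [intervalIntegral.integral_comp_neg]
  rw [intervalIntegral.integral_smul, intervalIntegral.integral_add hf, hneg, ← two_smul ℝ,
    smul_smul]
  · norm_num
  · simpa using ((IntervalIntegrable.iff_comp_neg).mp hf).symm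

theorem abs_mul_lt_one_of_mem_Icc {g v : ℝ} (hg : |g| < 1) (hv : v ∈ Icc (-1 : ℝ) 1) :
    |g * v| < 1 := by
  rw [abs_mul]
  exact mul_lt_one_of_nonneg_of_lt_one_left (abs_nonneg g) hg (abs_le.2 hv)

theorem integral_comp_mobius_mul_deriv {g : ℝ} (hg : |g| < 1) (K : ℝ → ℝ) :
    ∫ v in (-1 : ℝ)..1, K ((v + g) / (1 + g * v)) * ((1 - g ^ 2) / (1 + g * v) ^ 2) =
      ∫ c in (-1 : ℝ)..1, K c := by
  have hden : ∀ v ∈ Icc (-1 : ℝ) 1, 0 < 1 + g * v := fun v hv => by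
    linarith [(abs_lt.1 (abs_mul_lt_one_of_mem_Icc hg hv)).1]
  have hderiv : ∀ v ∈ Ioo (-1 : ℝ) 1,
      HasDerivAt (fun v => (v + g) / (1 + g * v)) ((1 - g ^ 2) / (1 + g * v) ^ 2) v := by
    intro v hv
    have h := ((hasDerivAt_id' v).add_const g).fun_div
      (((hasDerivAt_id' v).const_mul g).const_add 1) (hden v (Ioo_subset_Icc_self hv)).ne'
    exact h.congr_deriv (by ring)
  have h := intervalIntegral.integral_comp_mul_deriv_of_deriv_nonneg (a := -1) (b := 1) (g := K)
    (f := fun v => (v + g) / (1 + g * v)) (f' := fun v => (1 - g ^ 2) / (1 + g * v) ^ 2)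
    (ContinuousOn.div (by fun_prop) (by fun_prop) fun v hv => (hden v (by simpa using hv)).ne')
    (by simpa using hderiv) (fun v _ => div_nonneg (by nlinarith [abs_lt.1 hg]) (sq_nonneg _))
  obtain ⟨hg₁, hg₂⟩ := abs_lt.mp hg
  have hm1 : (-1 + g) / (1 + -g) = -1 := by
    rw [div_eq_iff (by linarith)]; ring
  have hp1 : (1 + g) / (1 + g) = 1 := div_self (by linarith)
  simpa [hm1, hp1] using h

-- With `v = sin θ` and `w = sin φ`, the substitution is `tan φ = √(1 - g²) tan θ`.
theorem integral_comp_div_sqrt_mul_deriv {g : ℝ} (hg : |g| < 1) (K : ℝ → ℝ) :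
    ∫ v in (-1 : ℝ)..1, K (√(1 - g ^ 2) * v / √(1 - g ^ 2 * v ^ 2)) *
        (√(1 - g ^ 2) / √(1 - g ^ 2 * v ^ 2) ^ 3) =
      ∫ w in (-1 : ℝ)..1, K w := by
  have hP : ∀ v ∈ Icc (-1 : ℝ) 1, 0 < 1 - g ^ 2 * v ^ 2 := fun v hv => by
    have := abs_mul_lt_one_of_mem_Icc hg hv
    nlinarith [abs_nonneg (g * v), sq_abs (g * v)]
  have hD : 0 < √(1 - g ^ 2) := sqrt_pos.2 (by simpa using hP 1 (by norm_num))
  have hderiv : ∀ v ∈ Ioo (-1 : ℝ) 1,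
      HasDerivAt (fun v => √(1 - g ^ 2) * v / √(1 - g ^ 2 * v ^ 2))
        (√(1 - g ^ 2) / √(1 - g ^ 2 * v ^ 2) ^ 3) v := by
    intro v hv
    have hPv := hP v (Ioo_subset_Icc_self hv)
    have hS := sqrt_pos.2 hPv
    have h := ((hasDerivAt_id' v).const_mul √(1 - g ^ 2)).fun_div
      ((((hasDerivAt_pow 2 v).const_mul (g ^ 2)).const_sub 1).sqrt hPv.ne') hS.ne'
    refine h.congr_deriv ?_
    field_simp
    rw [sq_sqrt hPv.le]
    ring
  have h := intervalIntegral.integral_comp_mul_deriv_of_deriv_nonneg (a := -1) (b := 1) (g := K)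
    (f := fun v => √(1 - g ^ 2) * v / √(1 - g ^ 2 * v ^ 2))
    (f' := fun v => √(1 - g ^ 2) / √(1 - g ^ 2 * v ^ 2) ^ 3)
    (ContinuousOn.div (by fun_prop) (by fun_prop)
      fun v hv => (sqrt_pos.2 (hP v (by simpa using hv))).ne')
    (by simpa using hderiv) (fun v _ => by positivity)
  simpa [hD.ne'] using h

-- `A = 1 - v²`, `B = 1 + g v`, `C = 1 - g v`, `D = 1 - g²` in the Möbius substitution.
theorem mobius_jacobian_rpow_eq {A B C D : ℝ} (hA : 0 < A) (hB : 0 < B) (hC : 0 < C)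
    (hD : 0 < D) (l : ℝ) :
    (A * D / B ^ 2) ^ (l - 1 / 2) * (D * C / B) ^ (-l) * (D / B ^ 2) =
      √D * (A ^ (l - 1 / 2) * (B ^ (-(l + 1)) * C ^ (-l))) := by
  refine log_injOn_pos (mem_Ioi.2 (by positivity)) (mem_Ioi.2 (by positivity)) ?_
  simp (disch := positivity) only [log_mul, log_div, log_rpow, log_sqrt, log_pow]
  ring

-- `A = 1 - v²`, `S = √(1 - g² v²)`, `D = 1 - g²` in the rescaling substitution.
theorem rescaling_jacobian_rpow_eq {A S D : ℝ} (hA : 0 < A) (hS : 0 < S) (hD : 0 < D) (l : ℝ) :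
    (A / S ^ 2) ^ (l - 1 / 2) * (√D / S ^ 3) =
      √D * (A ^ (l - 1 / 2) * (S ^ 2) ^ (-(l + 1))) := by
  refine log_injOn_pos (mem_Ioi.2 (by positivity)) (mem_Ioi.2 (by positivity)) ?_
  simp (disch := positivity) only [log_mul, log_div, log_rpow, log_sqrt, log_pow]
  ring

theorem rpow_neg_add_one_mul_add_swap {B C : ℝ} (hB : 0 < B) (hC : 0 < C) (l : ℝ) :
    B ^ (-(l + 1)) * C ^ (-l) + C ^ (-(l + 1)) * B ^ (-l) = (B * C) ^ (-(l + 1)) * (B + C) := by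
  have h (x : ℝ) (hx : 0 < x) : x ^ (-l) = x ^ (-(l + 1)) * x := by
    rw [← rpow_add_one hx.ne']; ring_nf
  rw [mul_rpow hB.le hC.le, h B hB, h C hC]
  ring

theorem integral_one_sub_sq_rpow_mul_rpow_eq_mobius {l g : ℝ} (hg : |g| < 1) :
    ∫ c in (-1 : ℝ)..1, (1 - c ^ 2) ^ (l - 1 / 2) * (1 - 2 * g * c + g ^ 2) ^ (-l) =
      √(1 - g ^ 2) * ∫ v in (-1 : ℝ)..1,
        (1 - v ^ 2) ^ (l - 1 / 2) * ((1 + g * v) ^ (-(l + 1)) * (1 - g * v) ^ (-l)) := by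
  rw [← intervalIntegral.integral_const_mul, ← integral_comp_mobius_mul_deriv hg]
  refine intervalIntegral.integral_congr_Ioo_of_le (by norm_num) fun v hv => ?_
  have hgv := abs_lt.1 (abs_mul_lt_one_of_mem_Icc hg (Ioo_subset_Icc_self hv))
  have hB : 0 < 1 + g * v := by linarith
  have e1 : 1 - ((v + g) / (1 + g * v)) ^ 2 = (1 - v ^ 2) * (1 - g ^ 2) / (1 + g * v) ^ 2 := by
    rw [div_pow, eq_div_iff (by positivity), sub_mul, div_mul_cancel₀ _ (by positivity)]
    ring
  have e2 : 1 - 2 * g * ((v + g) / (1 + g * v)) + g ^ 2 =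
      (1 - g ^ 2) * (1 - g * v) / (1 + g * v) := by
    field_simp; ring
  simp only [e1, e2]
  exact mobius_jacobian_rpow_eq (by nlinarith [hv.1, hv.2]) hB (by linarith)
    (by nlinarith [abs_lt.1 hg]) l

theorem integral_one_sub_sq_rpow_mul_rpow_eq_symm {l g : ℝ} (hl : -1 / 2 < l) (hg : |g| < 1) :
    ∫ v in (-1 : ℝ)..1,
        (1 - v ^ 2) ^ (l - 1 / 2) * ((1 + g * v) ^ (-(l + 1)) * (1 - g * v) ^ (-l)) =
      ∫ v in (-1 : ℝ)..1, (1 - v ^ 2) ^ (l - 1 / 2) * (1 - g ^ 2 * v ^ 2) ^ (-(l + 1)) := by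
  have hB : ∀ v ∈ Icc (-1 : ℝ) 1, 0 < 1 + g * v := fun v hv => by
    linarith [(abs_lt.1 (abs_mul_lt_one_of_mem_Icc hg hv)).1]
  have hC : ∀ v ∈ Icc (-1 : ℝ) 1, 0 < 1 - g * v := fun v hv => by
    linarith [(abs_lt.1 (abs_mul_lt_one_of_mem_Icc hg hv)).2]
  have hcont : ContinuousOn (fun v => (1 + g * v) ^ (-(l + 1)) * (1 - g * v) ^ (-l))
      (uIcc (-1) 1) := by
    rw [uIcc_of_le (by norm_num)]
    exact (ContinuousOn.rpow_const (by fun_prop) fun v hv => Or.inl (hB v hv).ne').mul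
      (ContinuousOn.rpow_const (by fun_prop) fun v hv => Or.inl (hC v hv).ne')
  rw [intervalIntegral.integral_eq_integral_even_part
    ((intervalIntegrable_one_sub_sq_rpow (by linarith)).mul_continuousOn hcont)]
  refine intervalIntegral.integral_congr fun v hv => ?_
  rw [uIcc_of_le (by norm_num)] at hv
  simp only [neg_sq, mul_neg, ← sub_eq_add_neg, sub_neg_eq_add, smul_eq_mul]
  rw [← mul_add, rpow_neg_add_one_mul_add_swap (hB v hv) (hC v hv)]
  ring_nf

theorem integral_one_sub_sq_rpow_eq_rescaling {l g : ℝ} (hg : |g| < 1) :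
    ∫ w in (-1 : ℝ)..1, (1 - w ^ 2) ^ (l - 1 / 2) =
      √(1 - g ^ 2) * ∫ v in (-1 : ℝ)..1,
        (1 - v ^ 2) ^ (l - 1 / 2) * (1 - g ^ 2 * v ^ 2) ^ (-(l + 1)) := by
  rw [← intervalIntegral.integral_const_mul, ← integral_comp_div_sqrt_mul_deriv hg]
  refine intervalIntegral.integral_congr_Ioo_of_le (by norm_num) fun v hv => ?_
  have hD : 0 < 1 - g ^ 2 := by nlinarith [abs_lt.1 hg]
  have hP : 0 < 1 - g ^ 2 * v ^ 2 := by
    have := abs_mul_lt_one_of_mem_Icc hg (Ioo_subset_Icc_self hv)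
    nlinarith [abs_nonneg (g * v), sq_abs (g * v)]
  have e : 1 - (√(1 - g ^ 2) * v / √(1 - g ^ 2 * v ^ 2)) ^ 2 =
      (1 - v ^ 2) / √(1 - g ^ 2 * v ^ 2) ^ 2 := by
    field_simp
    rw [sq_sqrt hD.le, sq_sqrt hP.le]
    ring
  simp only [e]
  rw [rescaling_jacobian_rpow_eq (by nlinarith [hv.1, hv.2]) (sqrt_pos.2 hP) hD l, sq_sqrt hP.le]

theorem integral_one_sub_sq_rpow_mul_rpow_eq {l g : ℝ} (hl : -1 / 2 < l) (hg : |g| < 1) :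
    ∫ c in (-1 : ℝ)..1, (1 - c ^ 2) ^ (l - 1 / 2) * (1 - 2 * g * c + g ^ 2) ^ (-l) =
      ∫ w in (-1 : ℝ)..1, (1 - w ^ 2) ^ (l - 1 / 2) := by
  rw [integral_one_sub_sq_rpow_mul_rpow_eq_mobius hg,
    integral_one_sub_sq_rpow_mul_rpow_eq_symm hl hg, integral_one_sub_sq_rpow_eq_rescaling hg]

theorem semicircle_cauchyTransform_spec {z : ℝ} (hz : 2 < z) :
    0 < (z - √(z ^ 2 - 4)) / 2 ∧ (z - √(z ^ 2 - 4)) / 2 < 1 ∧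
      ((z - √(z ^ 2 - 4)) / 2) ^ 2 + 1 = z * ((z - √(z ^ 2 - 4)) / 2) := by
  have hs : √(z ^ 2 - 4) ^ 2 = z ^ 2 - 4 := sq_sqrt (by nlinarith)
  have hs0 := sqrt_nonneg (z ^ 2 - 4)
  refine ⟨?_, ?_, by linear_combination hs / 4⟩
  · nlinarith
  · nlinarith

theorem integral_rpow_neg_mul_four_sub_sq_rpow {l z g : ℝ} (hg : 0 < g)
    (hz : g ^ 2 + 1 = z * g) :
    ∫ x in (-2 : ℝ)..2, (z - x) ^ (-l) * (4 - x ^ 2) ^ (l - 1 / 2) =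
      2 * 4 ^ (l - 1 / 2) * g ^ l *
        ∫ c in (-1 : ℝ)..1, (1 - c ^ 2) ^ (l - 1 / 2) * (1 - 2 * g * c + g ^ 2) ^ (-l) := by
  have h := intervalIntegral.integral_comp_mul_left (a := -1) (b := 1)
    (fun x => (z - x) ^ (-l) * (4 - x ^ 2) ^ (l - 1 / 2)) two_ne_zero
  norm_num at h
  have hpoint : EqOn (fun c => (z - 2 * c) ^ (-l) * (4 - (2 * c) ^ 2) ^ (l - 1 / 2))
      (fun c => 4 ^ (l - 1 / 2) * g ^ l *
        ((1 - c ^ 2) ^ (l - 1 / 2) * (1 - 2 * g * c + g ^ 2) ^ (-l))) (uIcc (-1) 1) := by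
    intro c hc
    rw [uIcc_of_le (by norm_num)] at hc
    have hA : 0 ≤ 1 - c ^ 2 := by nlinarith [hc.1, hc.2]
    have hE : 0 ≤ 1 - 2 * g * c + g ^ 2 := by nlinarith [hc.2, sq_nonneg (1 - g)]
    have hzc : z - 2 * c = (1 - 2 * g * c + g ^ 2) / g := by
      rw [eq_div_iff hg.ne']
      linear_combination -hz
    dsimp only
    rw [hzc, show 4 - (2 * c) ^ 2 = 4 * (1 - c ^ 2) by ring, div_rpow hE hg.le,
      rpow_neg hg.le, div_inv_eq_mul, mul_rpow zero_le_four hA]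
    ring
  rw [intervalIntegral.integral_congr hpoint, intervalIntegral.integral_const_mul] at h
  linear_combination -2 * h

theorem stmt_0 (l : ℝ) (hl : 0 < l) (z : ℝ) (hz : 2 < z) :
    ∫ x in (-2 : ℝ)..2, (z - x) ^ (-l) * (4 - x ^ 2) ^ (l - 1 / 2) =
      (4 : ℝ) ^ (2 * l) * (Real.Gamma (l + 1 / 2) ^ 2 / Real.Gamma (2 * l + 1)) *
        ((z - Real.sqrt (z ^ 2 - 4)) / 2) ^ l := by
  obtain ⟨hg0, hg1, hgz⟩ := semicircle_cauchyTransform_spec hz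
  have hbeta := integral_one_sub_sq_rpow (a := l + 1 / 2) (by linarith)
  rw [show l + 1 / 2 - 1 = l - 1 / 2 by ring, show 2 * (l + 1 / 2) = 2 * l + 1 by ring] at hbeta
  have h4 : (2 : ℝ) * 4 ^ (l - 1 / 2) * 2 ^ (2 * l + 1 - 1) = 4 ^ (2 * l) := by
    rw [show (4 : ℝ) = 2 ^ (2 : ℝ) by norm_num, ← rpow_mul zero_le_two,
      ← rpow_mul zero_le_two, ← rpow_one_add' zero_le_two (by linarith), ← rpow_add two_pos]
    ring_nf
  rw [integral_rpow_neg_mul_four_sub_sq_rpow hg0 hgz,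
    integral_one_sub_sq_rpow_mul_rpow_eq (by linarith) (abs_lt.2 ⟨by linarith, hg1⟩), hbeta,
    ← h4]
  ring
end

section
/- For every real λ > 0 and every real z > 2, ∫_{-2}^{2} (z-x)^{-λ} (4-x²)^{λ-1/2} dx = 4^{2λ} (Γ(λ+1/2)²/Γ(2λ+1)) · (z+2)^{-λ} · ₂F₁(λ, λ+1/2; 2λ+1; 4/(z+2)), where ₂F₁ is the Gauss hypergeometric function and the argument 4/(z+2) lies in (0,1). -/
/-- The Gauss hypergeometric function `₂F₁(a, b; c; w)` defined by its power series,
with `(a)ₙ` the rising factorial (Pochhammer symbol). -/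
noncomputable def hyp2F1 (a b c w : ℝ) : ℝ :=
  ∑' n : ℕ, (ascPochhammer ℝ n).eval a * (ascPochhammer ℝ n).eval b /
      ((ascPochhammer ℝ n).eval c * (Nat.factorial n)) * w ^ n

/-!
The substitution `x = 4t - 2` gives `z - x = (z + 2)(1 - wt)` with `w = 4/(z + 2)` and
`4 - x² = 16 t(1 - t)`, turning the integral into Euler's integral
`∫₀¹ t^(b-1) (1-t)^(c-b-1) (1-wt)^(-a) dt` with `a = λ`, `b = c - b = λ + 1/2` and
`c = 2λ + 1`.
Expanding `(1 - wt)^(-a)` by the binomial series and integrating term by term against Beta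
integrals gives `Γ(b)Γ(c-b)/Γ(c) · ₂F₁(a, b; c; w)`.
-/

open Polynomial Set MeasureTheory

lemma Ring.choose_add_sub_one_eq (a : ℝ) (n : ℕ) :
    Ring.choose (a + n - 1) n = (ascPochhammer ℝ n).eval a / n.factorial := by
  rw [Ring.choose_eq_smul, descPochhammer_smeval_eq_ascPochhammer,
    ascPochhammer_smeval_eq_eval, smul_eq_mul, inv_mul_eq_div]
  ring_nf

lemma mem_eball_zero_one_of_abs_lt_one {u : ℝ} (hu : |u| < 1) :
    u ∈ Metric.eball (0 : ℝ) 1 := by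
  simpa [enorm_eq_nnnorm, ← NNReal.coe_lt_coe] using hu

theorem hasSum_ascPochhammer_div_factorial_mul_pow (a : ℝ) {u : ℝ} (hu : |u| < 1) :
    HasSum (fun n : ℕ => (ascPochhammer ℝ n).eval a / n.factorial * u ^ n)
      ((1 - u) ^ (-a)) := by
  have := (Real.one_div_one_sub_rpow_hasFPowerSeriesOnBall_zero a).hasSum
    (mem_eball_zero_one_of_abs_lt_one hu)
  simpa [FormalMultilinearSeries.ofScalars_apply_eq, Ring.choose_add_sub_one_eq, mul_comm,
    Real.rpow_neg (by linarith [le_abs_self u] : (0 : ℝ) ≤ 1 - u)] using this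

theorem summable_abs_ascPochhammer_div_factorial_mul_pow (a : ℝ) {u : ℝ} (hu : |u| < 1) :
    Summable (fun n : ℕ => |(ascPochhammer ℝ n).eval a / n.factorial| * |u| ^ n) := by
  have := FormalMultilinearSeries.summable_norm_apply _ <| Metric.eball_subset_eball
    (Real.one_div_one_sub_rpow_hasFPowerSeriesOnBall_zero a).r_le
    (mem_eball_zero_one_of_abs_lt_one hu)
  simpa [FormalMultilinearSeries.ofScalars_apply_eq, Ring.choose_add_sub_one_eq, abs_pow,
    mul_comm, abs_div] using this

lemma ofReal_rpow_mul_one_sub_rpow {p q t : ℝ} (ht : t ∈ Icc (0 : ℝ) 1) :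
    ((t ^ (p - 1) * (1 - t) ^ (q - 1) : ℝ) : ℂ) =
      (t : ℂ) ^ ((p : ℂ) - 1) * (1 - (t : ℂ)) ^ ((q : ℂ) - 1) := by
  rw [Complex.ofReal_mul, Complex.ofReal_cpow ht.1, Complex.ofReal_cpow (sub_nonneg.2 ht.2)]
  push_cast
  rfl

theorem integrableOn_rpow_mul_one_sub_rpow {p q : ℝ} (hp : 0 < p) (hq : 0 < q) :
    IntegrableOn (fun t : ℝ => t ^ (p - 1) * (1 - t) ^ (q - 1)) (Ioc 0 1) := by
  have hC := (Complex.betaIntegral_convergent (u := p) (v := q) (by simpa) (by simpa)).1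
  refine IntegrableOn.congr_fun hC.re (fun t ht => ?_) measurableSet_Ioc
  simp [← ofReal_rpow_mul_one_sub_rpow (Ioc_subset_Icc_self ht)]

theorem integral_Ioc_rpow_mul_one_sub_rpow {p q : ℝ} (hp : 0 < p) (hq : 0 < q) :
    ∫ t in Ioc (0 : ℝ) 1, t ^ (p - 1) * (1 - t) ^ (q - 1) =
      Real.Gamma p * Real.Gamma q / Real.Gamma (p + q) := by
  have h := Complex.betaIntegral_eq_Gamma_mul_div p q (by simpa) (by simpa)
  rw [Complex.betaIntegral, intervalIntegral.integral_of_le zero_le_one,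
    ← setIntegral_congr_fun measurableSet_Ioc
      (fun t ht => ofReal_rpow_mul_one_sub_rpow (Ioc_subset_Icc_self ht)),
    integral_complex_ofReal, ← Complex.ofReal_add] at h
  simp only [Complex.Gamma_ofReal] at h
  exact_mod_cast h

theorem Real.Gamma_add_nat_eq_ascPochhammer_mul {s : ℝ} (hs : 0 < s) (n : ℕ) :
    Real.Gamma (s + n) = (ascPochhammer ℝ n).eval s * Real.Gamma s := by
  induction n with
  | zero => simp
  | succ n ih =>
    rw [Nat.cast_succ, ← add_assoc, Real.Gamma_add_one (by positivity), ih,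
      ascPochhammer_succ_right, eval_mul, eval_add, eval_X, eval_natCast]
    ring

lemma Real.Gamma_add_nat_div_Gamma_add_nat {b c : ℝ} (hb : 0 < b) (hc : 0 < c) (n : ℕ) :
    Real.Gamma (b + n) / Real.Gamma (c + n) =
      Real.Gamma b / Real.Gamma c *
        ((ascPochhammer ℝ n).eval b / (ascPochhammer ℝ n).eval c) := by
  rw [Real.Gamma_add_nat_eq_ascPochhammer_mul hb, Real.Gamma_add_nat_eq_ascPochhammer_mul hc]
  have := (ascPochhammer_pos n c hc).ne'
  have := (Real.Gamma_pos_of_pos hc).ne'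
  field_simp

theorem integral_Ioc_rpow_nat_add_mul_one_sub_rpow_le {p q : ℝ} (hp : 0 < p) (hq : 0 < q)
    (n : ℕ) : ∫ t in Ioc (0 : ℝ) 1, t ^ (p + n - 1) * (1 - t) ^ (q - 1) ≤
      Real.Gamma p * Real.Gamma q / Real.Gamma (p + q) := by
  rw [← integral_Ioc_rpow_mul_one_sub_rpow hp hq]
  refine setIntegral_mono_on (integrableOn_rpow_mul_one_sub_rpow (by positivity) hq)
    (integrableOn_rpow_mul_one_sub_rpow hp hq) measurableSet_Ioc fun t ht => ?_
  exact mul_le_mul_of_nonneg_right (Real.rpow_le_rpow_of_exponent_ge ht.1 ht.2 (by simp))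
    (Real.rpow_nonneg (sub_nonneg.2 ht.2) _)

theorem hasSum_rpow_mul_one_sub_rpow_mul_one_sub_mul_rpow (a p q : ℝ) {w t : ℝ} (hw : |w| < 1)
    (ht : t ∈ Ioc (0 : ℝ) 1) :
    HasSum (fun n : ℕ => (ascPochhammer ℝ n).eval a / n.factorial * w ^ n *
        (t ^ (p + n - 1) * (1 - t) ^ (q - 1)))
      (t ^ (p - 1) * (1 - t) ^ (q - 1) * (1 - w * t) ^ (-a)) := by
  have hwt : |w * t| < 1 := by
    rw [abs_mul, abs_of_pos ht.1]
    exact (mul_le_of_le_one_right (abs_nonneg w) ht.2).trans_lt hw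
  have hterm (n : ℕ) : (ascPochhammer ℝ n).eval a / n.factorial * w ^ n *
      (t ^ (p + n - 1) * (1 - t) ^ (q - 1)) = t ^ (p - 1) * (1 - t) ^ (q - 1) *
        ((ascPochhammer ℝ n).eval a / n.factorial * (w * t) ^ n) := by
    rw [show p + n - 1 = (p - 1) + n by ring, Real.rpow_add ht.1, Real.rpow_natCast]
    ring
  simpa only [hterm] using (hasSum_ascPochhammer_div_factorial_mul_pow a hwt).mul_left
    (t ^ (p - 1) * (1 - t) ^ (q - 1))

theorem integral_euler_eq_hyp2F1 (a : ℝ) {b c w : ℝ} (hb : 0 < b) (hbc : b < c) (hw : |w| < 1) :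
    ∫ t in (0 : ℝ)..1, t ^ (b - 1) * (1 - t) ^ (c - b - 1) * (1 - w * t) ^ (-a) =
      Real.Gamma b * Real.Gamma (c - b) / Real.Gamma c * hyp2F1 a b c w := by
  have hcb : 0 < c - b := sub_pos.2 hbc
  set coef : ℕ → ℝ := fun n => (ascPochhammer ℝ n).eval a / n.factorial
  set F : ℕ → ℝ → ℝ := fun n t =>
    coef n * w ^ n * (t ^ (b + n - 1) * (1 - t) ^ (c - b - 1))
  have hF_int n : IntegrableOn (F n) (Ioc 0 1) :=
    (integrableOn_rpow_mul_one_sub_rpow (by positivity) hcb).const_mul _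
  have hF_integral n : ∫ t in Ioc 0 1, F n t = Real.Gamma b * Real.Gamma (c - b) / Real.Gamma c *
      ((ascPochhammer ℝ n).eval a * (ascPochhammer ℝ n).eval b /
        ((ascPochhammer ℝ n).eval c * n.factorial) * w ^ n) := by
    rw [integral_const_mul, integral_Ioc_rpow_mul_one_sub_rpow (by positivity) hcb,
      show b + n + (c - b) = c + n by ring, mul_div_right_comm,
      Real.Gamma_add_nat_div_Gamma_add_nat hb (hb.trans hbc)]
    ring
  have hF_norm n : ∫ t in Ioc 0 1, ‖F n t‖ ≤
      |coef n| * |w| ^ n * (Real.Gamma b * Real.Gamma (c - b) / Real.Gamma c) := by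
    rw [setIntegral_congr_fun measurableSet_Ioc (fun t ht => by
        rw [norm_mul, Real.norm_of_nonneg (mul_nonneg (Real.rpow_nonneg ht.1.le _)
          (Real.rpow_nonneg (sub_nonneg.2 ht.2) _))]), integral_const_mul]
    simpa [abs_mul, abs_pow] using mul_le_mul_of_nonneg_left
      (integral_Ioc_rpow_nat_add_mul_one_sub_rpow_le hb hcb n) (norm_nonneg (coef n * w ^ n))
  have hF_summable : Summable fun n => ∫ t in Ioc 0 1, ‖F n t‖ :=
    .of_nonneg_of_le (fun n => integral_nonneg fun t => norm_nonneg _) hF_norm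
      ((summable_abs_ascPochhammer_div_factorial_mul_pow a hw).mul_right _)
  have hF_tsum : EqOn (fun t => t ^ (b - 1) * (1 - t) ^ (c - b - 1) * (1 - w * t) ^ (-a))
      (fun t => ∑' n, F n t) (Ioc 0 1) := fun t ht =>
    (hasSum_rpow_mul_one_sub_rpow_mul_one_sub_mul_rpow a b (c - b) hw ht).tsum_eq.symm
  rw [intervalIntegral.integral_of_le zero_le_one, setIntegral_congr_fun measurableSet_Ioc hF_tsum,
    ← integral_tsum_of_summable_integral_norm hF_int hF_summable, tsum_congr hF_integral,
    tsum_mul_left, hyp2F1]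

lemma four_mul_sixteen_rpow (l : ℝ) : (4 : ℝ) * 16 ^ (l - 1 / 2) = 4 ^ (2 * l) := by
  rw [show (16 : ℝ) = 4 ^ (2 : ℝ) by norm_num, ← Real.rpow_mul (by norm_num), mul_comm,
    ← Real.rpow_add_one four_ne_zero]
  ring_nf

lemma integral_neg_two_two_eq (f : ℝ → ℝ) :
    ∫ x in (-2 : ℝ)..2, f x = 4 * ∫ t in (0 : ℝ)..1, f (4 * t - 2) := by
  rw [intervalIntegral.integral_comp_mul_sub f four_ne_zero]
  norm_num [smul_eq_mul, ← mul_assoc]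

lemma integrand_comp_four_mul_sub_two {l z t : ℝ} (hz : 2 < z) (ht : t ∈ Icc (0 : ℝ) 1) :
    (z - (4 * t - 2)) ^ (-l) * (4 - (4 * t - 2) ^ 2) ^ (l - 1 / 2) =
      (z + 2) ^ (-l) * 16 ^ (l - 1 / 2) * (t ^ ((l + 1 / 2) - 1) *
        (1 - t) ^ ((2 * l + 1) - (l + 1 / 2) - 1) * (1 - 4 / (z + 2) * t) ^ (-l)) := by
  have hz2 : 0 < z + 2 := by linarith
  have hwt : 0 ≤ 1 - 4 / (z + 2) * t := by
    rw [sub_nonneg, div_mul_eq_mul_div, div_le_one hz2]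
    linarith [ht.2]
  rw [show z - (4 * t - 2) = (z + 2) * (1 - 4 / (z + 2) * t) by field_simp; ring,
    show 4 - (4 * t - 2) ^ 2 = 16 * (t * (1 - t)) by ring,
    show (2 * l + 1) - (l + 1 / 2) - 1 = l - 1 / 2 by ring,
    show l + 1 / 2 - 1 = l - 1 / 2 by ring, Real.mul_rpow hz2.le hwt,
    Real.mul_rpow (by norm_num) (mul_nonneg ht.1 (sub_nonneg.2 ht.2)),
    Real.mul_rpow ht.1 (sub_nonneg.2 ht.2)]
  ring

theorem stmt_1 (l : ℝ) (hl : 0 < l) (z : ℝ) (hz : 2 < z) :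
    ∫ x in (-2 : ℝ)..2, (z - x) ^ (-l) * (4 - x ^ 2) ^ (l - 1 / 2) =
      (4 : ℝ) ^ (2 * l) * (Real.Gamma (l + 1 / 2) ^ 2 / Real.Gamma (2 * l + 1)) *
        (z + 2) ^ (-l) * hyp2F1 l (l + 1 / 2) (2 * l + 1) (4 / (z + 2)) := by
  have hw : |4 / (z + 2)| < 1 := by
    rw [abs_of_pos (by positivity), div_lt_one (by linarith)]
    linarith
  rw [integral_neg_two_two_eq, intervalIntegral.integral_congr fun t ht =>
      integrand_comp_four_mul_sub_two hz (by rwa [uIcc_of_le zero_le_one] at ht),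
    intervalIntegral.integral_const_mul,
    integral_euler_eq_hyp2F1 l (by linarith) (by linarith) hw,
    show 2 * l + 1 - (l + 1 / 2) = l + 1 / 2 by ring, ← four_mul_sixteen_rpow]
  ring
end

section
/- For every real λ ≥ 1 and every real z > 2, ∫_{-2}^{2} (z-x)^{-1} cos[(1 - 1/λ) arcsin(x/2)] (4-x²)^{-1/(2λ)} dx = c_λ · G(z)^{1-1/λ} · (z²-4)^{-1/(2λ)}, where G(z) = (z - √(z²-4))/2 and c_λ = 2^{1-1/λ} √π Γ(1 - 1/(2λ)) Γ(3/2 - 1/(2λ)) / Γ(2 - 1/λ). In other words, the Cauchy–Stieltjes transform of the normalized measure ν_λ equals the geometric mean G(z)^{1-1/λ} (1/√(z²-4))^{1/λ} of the Wigner and arcsine Cauchy–Stieltjes transforms. -/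
/-!
Put `a = 1 - 1/λ`. Substituting `x = 2 cos ψ` turns `cos (a arcsin (x/2)) (4 - x²)^(-1/(2λ)) dx`
into `Re (1 - e^{2iψ})^a dψ`, and `z - x` into `G + G⁻¹ - 2 cos ψ`, where `G = G(z)` and `G⁻¹` are
the roots of `t² - z t + 1`. The integrand is symmetric under `ψ ↦ 2π - ψ`, so the integral is half
of one over the whole unit circle; there `dz / ((z - G)(G⁻¹ - z)) = i dψ / (G + G⁻¹ - 2 cos ψ)`, and
Cauchy's formula for `(1 - w²)^a / (G⁻¹ - w)`, holomorphic on the unit disc, evaluates it as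
`2π (1 - G²)^a / (G⁻¹ - G)`. Since `G⁻¹ - G = √(z² - 4)` and `1 - G² = G √(z² - 4)`, the original
integral is `π G^a (z² - 4)^(-1/(2λ))`, and the duplication formula shows `c_λ = π`.
-/

open Real Set Metric MeasureTheory intervalIntegral
open Complex (I exp slitPlane)

theorem two_rpow_mul_sqrt_pi_mul_Gamma_mul_Gamma_add_half_div {s : ℝ} (hs : Gamma (2 * s) ≠ 0) :
    (2 : ℝ) ^ (2 * s - 1) * √π * Gamma s * Gamma (s + 1 / 2) / Gamma (2 * s) = π := by
  rw [mul_assoc _ (Gamma s), Gamma_mul_Gamma_add_half, div_eq_iff hs]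
  have h2 : (2 : ℝ) ^ (2 * s - 1) * 2 ^ (1 - 2 * s) = 1 := by
    rw [← rpow_add two_pos]; simp
  linear_combination (Gamma (2 * s) * √π * √π) * h2 + Gamma (2 * s) * mul_self_sqrt pi_pos.le

theorem two_mul_cos_lt_add_inv {G : ℝ} (hG0 : 0 < G) (hG1 : G ≠ 1) (ψ : ℝ) :
    2 * cos ψ < G + G⁻¹ := by
  have : 0 < G + G⁻¹ - 2 := by
    rw [show G + G⁻¹ - 2 = (G - 1) ^ 2 / G by field_simp; ring]
    exact div_pos (sq_pos_of_ne_zero (sub_ne_zero.2 hG1)) hG0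
  linarith [cos_le_one ψ]

theorem integral_neg_eq_integral_Ioo_mul_sin_smul_comp_mul_cos {E : Type*} [NormedAddCommGroup E]
    [NormedSpace ℝ E] {r : ℝ} (hr : 0 < r) (F : ℝ → E) :
    ∫ x in -r..r, F x = ∫ ψ in Ioo 0 π, (r * sin ψ) • F (r * cos ψ) := by
  have himage : (fun ψ => r * cos ψ) '' Icc 0 π = Icc (-r) r := by
    rw [← image_image (r * ·) cos, bijOn_cos.image_eq, image_mul_left_Icc hr.le (by norm_num)]
    simp
  have hderiv : ∀ ψ ∈ Icc 0 π, HasDerivWithinAt (fun ψ => r * cos ψ) (-(r * sin ψ)) (Icc 0 π) ψ :=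
    fun ψ _ => by simpa using ((hasDerivAt_cos ψ).const_mul r).hasDerivWithinAt
  have hinj : InjOn (fun ψ => r * cos ψ) (Icc 0 π) :=
    fun x hx y hy hxy => injOn_cos hx hy (mul_left_cancel₀ hr.ne' hxy)
  rw [integral_of_le (by linarith), ← integral_Icc_eq_integral_Ioc, ← himage,
    integral_image_eq_integral_abs_deriv_smul measurableSet_Icc hderiv hinj,
    integral_Icc_eq_integral_Ioo]
  refine setIntegral_congr_fun measurableSet_Ioo fun ψ hψ => ?_
  rw [abs_neg, abs_of_pos (mul_pos hr (sin_pos_of_pos_of_lt_pi hψ.1 hψ.2))]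

theorem integral_zero_two_mul_eq_two_smul_of_symm {E : Type*} [NormedAddCommGroup E]
    [NormedSpace ℝ E] {u : ℝ → E} {a : ℝ} (hu : IntervalIntegrable u volume 0 (2 * a))
    (hsymm : ∀ x, u (2 * a - x) = u x) :
    ∫ x in 0..2 * a, u x = 2 • ∫ x in 0..a, u x := by
  have hsnd : ∫ x in a..2 * a, u x = ∫ x in 0..a, u x := by
    have h := integral_comp_sub_left u (2 * a) (a := 0) (b := a)
    rw [show 2 * a - a = a by ring, sub_zero] at h
    simp only [hsymm] at h
    exact h.symm
  have ha : a ∈ uIcc 0 (2 * a) := by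
    rcases le_total 0 a with h | h
    · exact Or.inl ⟨by linarith, by linarith⟩ |> mem_uIcc.2
    · exact Or.inr ⟨by linarith, by linarith⟩ |> mem_uIcc.2
  rw [← integral_add_adjacent_intervals
    (hu.mono_set (uIcc_subset_uIcc_left ha)) (hu.mono_set (uIcc_subset_uIcc_right ha)),
    hsnd, two_smul]

noncomputable def oneSubSqCpow (a : ℝ) (w : ℂ) : ℂ := (1 - w ^ 2) ^ (a : ℂ)

theorem re_one_sub_sq_nonneg {w : ℂ} (hw : ‖w‖ ≤ 1) : 0 ≤ (1 - w ^ 2).re := by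
  have : (w ^ 2).re ≤ 1 :=
    (w ^ 2).re_le_norm.trans (by rw [norm_pow]; exact pow_le_one₀ (norm_nonneg w) hw)
  simpa using this

theorem diffContOnCl_oneSubSqCpow {a : ℝ} (ha : 0 ≤ a) :
    DiffContOnCl ℂ (oneSubSqCpow a) (ball 0 1) := by
  unfold oneSubSqCpow
  refine ⟨fun w hw => ?_, fun w hw => ?_⟩
  · rw [mem_ball_zero_iff] at hw
    have hw2 : ‖-w ^ 2‖ < 1 := by
      rw [norm_neg, norm_pow]; exact pow_lt_one₀ (norm_nonneg w) hw two_ne_zero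
    have hslit : 1 - w ^ 2 ∈ slitPlane := by
      simpa [sub_eq_add_neg] using Complex.mem_slitPlane_of_norm_lt_one hw2
    exact ((by fun_prop : DifferentiableAt ℂ (fun w : ℂ => 1 - w ^ 2) w).cpow
      (differentiableAt_const _) hslit).differentiableWithinAt
  · rw [closure_ball 0 one_ne_zero, mem_closedBall_zero_iff] at hw
    rcases ha.eq_or_lt with rfl | ha
    · simp only [Complex.ofReal_zero, Complex.cpow_zero]
      exact continuousWithinAt_const
    · exact ((Complex.continuousAt_cpow_const_of_re_pos (Or.inl (re_one_sub_sq_nonneg hw))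
        (by simpa using ha)).comp (f := fun w : ℂ => 1 - w ^ 2) (by fun_prop)).continuousWithinAt

theorem re_oneSubSqCpow_conj (a : ℝ) (w : ℂ) :
    (oneSubSqCpow a ((starRingEnd ℂ) w)).re = (oneSubSqCpow a w).re := by
  have h : 1 - (starRingEnd ℂ) w ^ 2 = (starRingEnd ℂ) (1 - w ^ 2) := by simp
  simp only [oneSubSqCpow, Complex.cpow_ofReal_re, h, Complex.norm_conj, Complex.arg_conj]
  split_ifs with hπ
  · rw [hπ]
  · rw [neg_mul, Real.cos_neg]

theorem re_oneSubSqCpow_exp_mul_I (a : ℝ) {ψ : ℝ} (hψ : ψ ∈ Ioo 0 π) :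
    (oneSubSqCpow a (exp (ψ * I))).re = (2 * sin ψ) ^ a * cos (a * (π / 2 - ψ)) := by
  have hsin : 0 < 2 * sin ψ := by linarith [sin_pos_of_pos_of_lt_pi hψ.1 hψ.2]
  have hθ : ψ - π / 2 ∈ Ioc (-π) π := ⟨by linarith [hψ.1, pi_pos], by linarith [hψ.2, pi_pos]⟩
  have hpolar : 1 - exp (ψ * I) ^ 2 = ((2 * sin ψ : ℝ) : ℂ) *
      (Complex.cos (ψ - π / 2 : ℝ) + Complex.sin (ψ - π / 2 : ℝ) * I) := by
    push_cast
    rw [Complex.cos_sub_pi_div_two, Complex.sin_sub_pi_div_two, Complex.exp_mul_I]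
    linear_combination
      (-1 : ℂ) * Complex.sin ψ ^ 2 * Complex.I_sq - Complex.sin_sq_add_cos_sq (ψ : ℂ)
  have hnorm : ‖1 - exp (ψ * I) ^ 2‖ = 2 * sin ψ := by
    rw [hpolar, norm_mul, Complex.norm_cos_add_sin_mul_I,
      Complex.norm_real, Real.norm_of_nonneg hsin.le, mul_one]
  rw [oneSubSqCpow, Complex.cpow_ofReal_re, hnorm, hpolar,
    Complex.arg_mul_cos_add_sin_mul_I hsin hθ, ← Real.cos_neg]
  ring_nf

theorem two_sin_mul_cos_arcsin_mul_rpow_eq_re_oneSubSqCpow (a : ℝ) {ψ : ℝ} (hψ : ψ ∈ Ioo 0 π) :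
    2 * sin ψ * (cos (a * arcsin (2 * cos ψ / 2)) * (4 - (2 * cos ψ) ^ 2) ^ ((a - 1) / 2)) =
      (oneSubSqCpow a (exp (ψ * I))).re := by
  have hsin₀ : 0 < sin ψ := sin_pos_of_pos_of_lt_pi hψ.1 hψ.2
  have hsin : 0 < 2 * sin ψ := by positivity
  have harcsin : arcsin (2 * cos ψ / 2) = π / 2 - ψ := by
    rw [mul_div_cancel_left₀ _ two_ne_zero, arcsin_eq_pi_div_two_sub_arccos,
      arccos_cos hψ.1.le hψ.2.le]
  have hsq : 4 - (2 * cos ψ) ^ 2 = (2 * sin ψ) ^ (2 : ℝ) := by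
    rw [rpow_two]; nlinarith [sin_sq_add_cos_sq ψ]
  rw [re_oneSubSqCpow_exp_mul_I a hψ, harcsin, hsq, ← rpow_mul hsin.le,
    mul_div_cancel₀ _ two_ne_zero, rpow_sub_one hsin.ne']
  field_simp [hsin₀.ne']

theorem DiffContOnCl.continuous_comp_exp_mul_I {E : Type*} [NormedAddCommGroup E]
    [NormedSpace ℂ E] {f : ℂ → E} (hf : DiffContOnCl ℂ f (ball 0 1)) :
    Continuous fun ψ : ℝ => f (exp (ψ * I)) := by
  refine hf.continuousOn.comp_continuous (by fun_prop) fun ψ => ?_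
  rw [closure_ball 0 one_ne_zero, mem_closedBall_zero_iff, Complex.norm_exp_ofReal_mul_I]

theorem DiffContOnCl.integral_inv_sub_two_cos_smul {E : Type*} [NormedAddCommGroup E]
    [NormedSpace ℂ E] [CompleteSpace E] {f : ℂ → E} (hf : DiffContOnCl ℂ f (ball 0 1)) {G : ℂ}
    (hG0 : G ≠ 0) (hG : ‖G‖ < 1) :
    ∫ ψ in 0..2 * π, (G + G⁻¹ - 2 * Complex.cos ψ)⁻¹ • f (exp (ψ * I)) =
      (2 * π / (G⁻¹ - G) : ℂ) • f G := by
  have hGinv : ∀ w ∈ closure (ball (0 : ℂ) 1), G⁻¹ - w ≠ 0 := by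
    intro w hw h
    rw [closure_ball 0 one_ne_zero, mem_closedBall_zero_iff, ← sub_eq_zero.1 h, norm_inv] at hw
    exact (one_lt_inv₀ (norm_pos_iff.2 hG0)).2 hG |>.not_ge hw
  have hg : DiffContOnCl ℂ (fun w => (G⁻¹ - w)⁻¹ • f w) (ball 0 1) :=
    (DifferentiableOn.diffContOnCl fun w hw =>
      ((differentiableAt_const _).sub differentiableAt_id).inv (hGinv w hw)
        |>.differentiableWithinAt).smul hf
  have hcauchy := hg.circleIntegral_sub_inv_smul (mem_ball_zero_iff.2 hG)
  have hkernel : ∀ ψ : ℝ, deriv (circleMap 0 1) ψ • (circleMap 0 1 ψ - G)⁻¹ •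
      (G⁻¹ - circleMap 0 1 ψ)⁻¹ • f (circleMap 0 1 ψ) =
      I • (G + G⁻¹ - 2 * Complex.cos ψ)⁻¹ • f (exp (ψ * I)) := by
    intro ψ
    have he : exp (ψ * I) ≠ 0 := Complex.exp_ne_zero _
    have hcos : 2 * Complex.cos ψ = exp (ψ * I) + (exp (ψ * I))⁻¹ := by
      rw [Complex.two_cos, ← Complex.exp_neg, neg_mul]
    have hfactor : (exp (ψ * I) - G) * (G⁻¹ - exp (ψ * I)) =
        exp (ψ * I) * (G + G⁻¹ - 2 * Complex.cos ψ) := by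
      rw [hcos]; field_simp; ring
    simp only [deriv_circleMap, circleMap_zero, Complex.ofReal_one, one_mul, smul_smul]
    congr 1
    rw [mul_comm _ I, mul_assoc, ← mul_inv, hfactor, mul_inv, mul_inv_cancel_left₀ he]
  rw [circleIntegral, integral_congr fun ψ _ => hkernel ψ, intervalIntegral.integral_smul,
    smul_smul] at hcauchy
  apply smul_right_injective E Complex.I_ne_zero
  simp only [hcauchy, smul_smul]
  congr 1
  ring

theorem DiffContOnCl.integral_inv_sub_two_cos_mul_re {f : ℂ → ℂ} (hf : DiffContOnCl ℂ f (ball 0 1))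
    {G : ℝ} (hG0 : 0 < G) (hG1 : G < 1) :
    ∫ ψ in 0..2 * π, (G + G⁻¹ - 2 * cos ψ)⁻¹ * (f (exp (ψ * I))).re =
      2 * π / (G⁻¹ - G) * (f G).re := by
  have hden : ∀ ψ : ℝ, 0 < G + G⁻¹ - 2 * cos ψ :=
    fun ψ => sub_pos.2 (two_mul_cos_lt_add_inv hG0 hG1.ne ψ)
  have hcast : ∀ ψ : ℝ, (G : ℂ) + (G : ℂ)⁻¹ - 2 * Complex.cos ψ = ((G + G⁻¹ - 2 * cos ψ : ℝ) : ℂ) :=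
    fun ψ => by push_cast; rfl
  have hcont : Continuous fun ψ : ℝ => ((G + G⁻¹ - 2 * cos ψ : ℝ) : ℂ)⁻¹ • f (exp (ψ * I)) :=
    ((by fun_prop : Continuous fun ψ : ℝ => ((G + G⁻¹ - 2 * cos ψ : ℝ) : ℂ)).inv₀
      fun ψ => by exact_mod_cast (hden ψ).ne').smul hf.continuous_comp_exp_mul_I
  have h := hf.integral_inv_sub_two_cos_smul (G := G) (by exact_mod_cast hG0.ne')
    (by rwa [Complex.norm_real, Real.norm_of_nonneg hG0.le])
  have hconst : (2 * π / ((G : ℂ)⁻¹ - G) : ℂ) = ((2 * π / (G⁻¹ - G) : ℝ) : ℂ) := by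
    push_cast; rfl
  simp only [hcast, hconst] at h
  have hre := congrArg Complex.re h
  rw [← Complex.reCLM_apply, ← ContinuousLinearMap.intervalIntegral_comp_comm _
    (hcont.intervalIntegrable _ _)] at hre
  simpa only [Complex.reCLM_apply, smul_eq_mul, ← Complex.ofReal_inv, Complex.re_ofReal_mul]
    using hre

theorem integral_zero_pi_inv_sub_two_cos_mul_re_oneSubSqCpow {a G : ℝ} (ha : 0 ≤ a)
    (hG0 : 0 < G) (hG1 : G < 1) :
    ∫ ψ in 0..π, (G + G⁻¹ - 2 * cos ψ)⁻¹ * (oneSubSqCpow a (exp (ψ * I))).re =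
      π * (1 - G ^ 2) ^ a / (G⁻¹ - G) := by
  set u : ℝ → ℝ := fun ψ => (G + G⁻¹ - 2 * cos ψ)⁻¹ * (oneSubSqCpow a (exp (ψ * I))).re
    with hu
  have hH := diffContOnCl_oneSubSqCpow ha
  have hcont : Continuous u :=
    ((by fun_prop : Continuous fun ψ => G + G⁻¹ - 2 * cos ψ).inv₀
      fun ψ => (sub_pos.2 (two_mul_cos_lt_add_inv hG0 hG1.ne ψ)).ne').mul
      (Complex.continuous_re.comp hH.continuous_comp_exp_mul_I)
  have hsymm : ∀ x, u (2 * π - x) = u x := fun x => by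
    have hconj : exp (↑(2 * π - x) * I) = starRingEnd ℂ (exp (x * I)) := by
      rw [← Complex.exp_conj, map_mul, Complex.conj_ofReal, Complex.conj_I, mul_neg,
        Complex.exp_neg, Complex.ofReal_sub, sub_mul, Complex.exp_sub, Complex.ofReal_mul,
        Complex.ofReal_ofNat, Complex.exp_two_pi_mul_I, one_div]
    simp only [hu, cos_two_pi_sub, hconj, re_oneSubSqCpow_conj]
  have hHG : (oneSubSqCpow a G).re = (1 - G ^ 2) ^ a := by
    rw [oneSubSqCpow, ← Complex.ofReal_pow, ← Complex.ofReal_one, ← Complex.ofReal_sub,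
      ← Complex.ofReal_cpow (by nlinarith), Complex.ofReal_re]
  have hfull := hH.integral_inv_sub_two_cos_mul_re hG0 hG1
  rw [integral_zero_two_mul_eq_two_smul_of_symm (hcont.intervalIntegrable _ _) hsymm, hHG,
    nsmul_eq_mul, Nat.cast_ofNat] at hfull
  linear_combination hfull / 2

theorem integral_inv_sub_mul_cos_arcsin_mul_rpow (a z : ℝ) :
    ∫ x in (-2 : ℝ)..2, (z - x)⁻¹ * cos (a * arcsin (x / 2)) * (4 - x ^ 2) ^ ((a - 1) / 2) =
      ∫ ψ in 0..π, (z - 2 * cos ψ)⁻¹ * (oneSubSqCpow a (exp (ψ * I))).re := by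
  rw [integral_neg_eq_integral_Ioo_mul_sin_smul_comp_mul_cos two_pos, integral_of_le pi_pos.le,
    integral_Ioc_eq_integral_Ioo]
  refine setIntegral_congr_fun measurableSet_Ioo fun ψ hψ => ?_
  rw [smul_eq_mul, ← two_sin_mul_cos_arcsin_mul_rpow_eq_re_oneSubSqCpow a hψ]
  ring

theorem stmt_7 (l : ℝ) (hl : 1 ≤ l) (z : ℝ) (hz : 2 < z) :
    ∫ x in (-2 : ℝ)..2, (z - x)⁻¹ * Real.cos ((1 - 1 / l) * Real.arcsin (x / 2)) *
        (4 - x ^ 2) ^ (-(1 / (2 * l))) =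
      ((2 : ℝ) ^ (1 - 1 / l) * Real.sqrt Real.pi * Real.Gamma (1 - 1 / (2 * l)) *
          Real.Gamma (3 / 2 - 1 / (2 * l)) / Real.Gamma (2 - 1 / l)) *
        ((z - Real.sqrt (z ^ 2 - 4)) / 2) ^ (1 - 1 / l) *
        (z ^ 2 - 4) ^ (-(1 / (2 * l))) := by
  have hconst : (2 : ℝ) ^ (1 - 1 / l) * √π * Gamma (1 - 1 / (2 * l)) *
      Gamma (3 / 2 - 1 / (2 * l)) / Gamma (2 - 1 / l) = π := by
    have h2s : 2 * (1 - 1 / (2 * l)) = 2 - 1 / l := by ring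
    have h := two_rpow_mul_sqrt_pi_mul_Gamma_mul_Gamma_add_half_div
      (s := 1 - 1 / (2 * l)) (h2s ▸ (Gamma_pos_of_pos (by field_simp; linarith)).ne')
    rwa [h2s, show 2 - 1 / l - 1 = 1 - 1 / l by ring,
      show 1 - 1 / (2 * l) + 1 / 2 = 3 / 2 - 1 / (2 * l) by ring] at h
  rw [show -(1 / (2 * l)) = (1 - 1 / l - 1) / 2 by ring, integral_inv_sub_mul_cos_arcsin_mul_rpow,
    hconst]
  set a := 1 - 1 / l
  have ha : 0 ≤ a := sub_nonneg.2 (div_le_one_of_le₀ hl (by linarith))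
  set S := √(z ^ 2 - 4)
  have hS2 : S ^ 2 = z ^ 2 - 4 := sq_sqrt (by nlinarith)
  have hS : 0 < S := sqrt_pos.2 (by nlinarith)
  set G := (z - S) / 2 with hG
  have hG0 : 0 < G := by nlinarith
  have hGinv : G⁻¹ = (z + S) / 2 := inv_eq_of_mul_eq_one_right (by linear_combination -hS2 / 4)
  have hhalf := integral_zero_pi_inv_sub_two_cos_mul_re_oneSubSqCpow ha hG0 (by nlinarith)
  rw [hGinv, show G + (z + S) / 2 = z by ring, show (z + S) / 2 - G = S by ring] at hhalf
  rw [hhalf, show 1 - G ^ 2 = G * S by linear_combination hS2 / 4, mul_rpow hG0.le hS.le,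
    ← hS2, ← rpow_natCast, ← rpow_mul hS.le, Nat.cast_ofNat,
    mul_div_cancel₀ _ two_ne_zero, rpow_sub_one hS.ne']
  ring
end

section
/- For every real x with -2 ≤ x ≤ 2, ∫_{-2}^{2} log|x - u| · (π√(4-u²))^{-1} du = 0. That is, the logarithmic potential of the arcsine distribution on [-2,2] is identically zero on [-2,2], so exp(-∫_{-2}^{2} log|x-u| (π√(4-u²))^{-1} du) does not depend on x ∈ [-2,2]. -/
open Real MeasureTheory intervalIntegral Set
open scoped ComplexConjugate Interval

/-!
Substituting `u = 2 cos θ` turns the arcsine law into the uniform law on `[0, π]`, and since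
`cos` is even the integral becomes half of one over a full period. There
`|2 cos φ - 2 cos θ| = |e^{iθ} - e^{iφ}| · |e^{iθ} - e^{-iφ}|`, so the integral splits into two
circle averages of `log |z - a|` with `|a| = 1`, and each vanishes by Jensen's formula.
-/

lemma norm_sub_mul_norm_sub_conj {z w : ℂ} (hz : ‖z‖ = 1) (hw : ‖w‖ = 1) :
    ‖z - w‖ * ‖z - conj w‖ = |2 * w.re - 2 * z.re| := by
  have hz' : z * conj z = 1 := by simp [Complex.mul_conj, Complex.normSq_eq_norm_sq, hz]
  have hw' : w * conj w = 1 := by simp [Complex.mul_conj, Complex.normSq_eq_norm_sq, hw]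
  have key : (z - w) * (z - conj w) = -z * ((w + conj w) - (z + conj z)) := by
    linear_combination hw' - hz'
  rw [Complex.add_conj, Complex.add_conj, ← Complex.ofReal_sub] at key
  rw [← norm_mul, key, norm_mul, norm_neg, hz, one_mul, Complex.norm_real, Real.norm_eq_abs]

lemma ae_cos_ne_cos (φ : ℝ) : ∀ᵐ θ : ℝ, cos θ ≠ cos φ := by
  have hcount : {θ : ℝ | cos θ = cos φ}.Countable := by
    refine ((countable_range fun k : ℤ => φ - 2 * k * π).union
      (countable_range fun k : ℤ => 2 * k * π - φ)).mono fun θ hθ => ?_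
    obtain ⟨k, hk | hk⟩ := Real.cos_eq_cos_iff.mp hθ
    · exact Or.inl ⟨k, by linarith⟩
    · exact Or.inr ⟨k, by linarith⟩
  exact hcount.ae_notMem volume

lemma intervalIntegrable_log_abs_two_cos_sub_two_cos (φ a b : ℝ) :
    IntervalIntegrable (fun θ => log |2 * cos φ - 2 * cos θ|) volume a b := by
  simp_rw [Real.log_abs]
  exact MeromorphicOn.intervalIntegrable_log (f := fun θ => 2 * cos φ - 2 * cos θ)
    fun θ _ => by fun_prop

lemma integral_log_norm_circleMap_sub {a : ℂ} (ha : ‖a‖ ≤ 1) :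
    ∫ θ in 0..2 * π, log ‖circleMap 0 1 θ - a‖ = 0 := by
  have h := circleAverage_log_norm_sub_const_of_mem_closedBall (c := 0) (R := 1)
    (a := a) (by simpa using ha)
  rw [log_one, circleAverage_def, smul_eq_zero] at h
  exact h.resolve_left (by positivity)

lemma integral_log_abs_two_cos_sub_two_cos_zero_two_pi (φ : ℝ) :
    ∫ θ in 0..2 * π, log |2 * cos φ - 2 * cos θ| = 0 := by
  set a := circleMap 0 1 φ
  have ha : ‖a‖ = 1 := by simp [a]
  have hsplit : ∀ᵐ θ : ℝ, θ ∈ Ι 0 (2 * π) → log |2 * cos φ - 2 * cos θ| =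
      log ‖circleMap 0 1 θ - a‖ + log ‖circleMap 0 1 θ - conj a‖ := by
    filter_upwards [ae_cos_ne_cos φ] with θ hθ _
    have hprod := norm_sub_mul_norm_sub_conj (z := circleMap 0 1 θ) (by simp) ha
    simp only [a, circleMap_zero_re, one_mul] at hprod
    have hne : |2 * cos φ - 2 * cos θ| ≠ 0 := by
      rw [abs_ne_zero, sub_ne_zero]; exact fun h => hθ (by linarith)
    rw [← hprod] at hne ⊢
    exact log_mul (left_ne_zero_of_mul hne) (right_ne_zero_of_mul hne)
  rw [integral_congr_ae hsplit, integral_add (circleIntegrable_log_norm_sub_const 1)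
    (circleIntegrable_log_norm_sub_const 1), integral_log_norm_circleMap_sub ha.le,
    integral_log_norm_circleMap_sub (by simp [ha]), add_zero]

lemma integral_comp_cos_zero_two_pi {f : ℝ → ℝ}
    (hf : IntervalIntegrable (fun θ => f (cos θ)) volume 0 π) :
    ∫ θ in 0..2 * π, f (cos θ) = 2 * ∫ θ in 0..π, f (cos θ) := by
  have hreflect : ∫ θ in π..2 * π, f (cos θ) = ∫ θ in 0..π, f (cos θ) := by
    simpa [cos_two_pi_sub, show 2 * π - π = π by ring] using
      integral_comp_sub_left (fun θ => f (cos θ)) (a := π) (b := 2 * π) (2 * π)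
  have hf' : IntervalIntegrable (fun θ => f (cos θ)) volume π (2 * π) := by
    simpa [cos_two_pi_sub, show 2 * π - π = π by ring] using (hf.comp_sub_left (2 * π)).symm
  rw [← integral_add_adjacent_intervals hf hf', hreflect, two_mul]

lemma integral_log_abs_two_cos_sub_two_cos (φ : ℝ) :
    ∫ θ in 0..π, log |2 * cos φ - 2 * cos θ| = 0 := by
  have h := integral_comp_cos_zero_two_pi (f := fun c => log |2 * cos φ - 2 * c|)
    (intervalIntegrable_log_abs_two_cos_sub_two_cos φ 0 π)
  rw [integral_log_abs_two_cos_sub_two_cos_zero_two_pi] at h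
  linarith

lemma sqrt_four_sub_two_mul_cos_sq {θ : ℝ} (hθ : 0 ≤ sin θ) :
    √(4 - (2 * cos θ) ^ 2) = 2 * sin θ := by
  rw [show 4 - (2 * cos θ) ^ 2 = (2 * sin θ) ^ 2 by nlinarith [sin_sq_add_cos_sq θ],
    sqrt_sq (by positivity)]

lemma integral_mul_arcsine_density (g : ℝ → ℝ) :
    ∫ u in (-2 : ℝ)..2, g u * (π * √(4 - u ^ 2))⁻¹ = π⁻¹ * ∫ θ in 0..π, g (2 * cos θ) := by
  have hsubst := integral_Icc_deriv_smul_of_deriv_nonpos (f := fun θ => 2 * cos θ)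
    (f' := fun θ => -(2 * sin θ)) (g := fun u => g u * (π * √(4 - u ^ 2))⁻¹)
    (by fun_prop) (fun θ _ => by simpa using (hasDerivAt_cos θ).const_mul 2)
    (fun θ hθ => by simpa using (sin_pos_of_pos_of_lt_pi hθ.1 hθ.2).le) pi_pos.le
  simp only [cos_pi, cos_zero, smul_eq_mul, mul_one, mul_neg, neg_mul,
    MeasureTheory.integral_neg, neg_inj] at hsubst
  have hweight : ∀ θ ∈ Ioo 0 π,
      2 * sin θ * (g (2 * cos θ) * (π * √(4 - (2 * cos θ) ^ 2))⁻¹) = π⁻¹ * g (2 * cos θ) := by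
    intro θ hθ
    have hsin := sin_pos_of_pos_of_lt_pi hθ.1 hθ.2
    rw [sqrt_four_sub_two_mul_cos_sq hsin.le]
    field_simp
  rw [integral_of_le (by norm_num), ← integral_Icc_eq_integral_Ioc, ← hsubst,
    integral_Icc_eq_integral_Ioo, setIntegral_congr_fun measurableSet_Ioo hweight,
    MeasureTheory.integral_const_mul, integral_of_le pi_pos.le, integral_Ioc_eq_integral_Ioo]

theorem stmt_13 (x : ℝ) (hx1 : -2 ≤ x) (hx2 : x ≤ 2) :
    ∫ u in (-2 : ℝ)..2, Real.log |x - u| * (Real.pi * Real.sqrt (4 - u ^ 2))⁻¹ = 0 := by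
  have hx : 2 * cos (arccos (x / 2)) = x := by
    rw [cos_arccos (by linarith) (by linarith)]; ring
  rw [integral_mul_arcsine_density, ← hx, integral_log_abs_two_cos_sub_two_cos, mul_zero]
end

section
/- For λ = 2 and every natural number n, the normalized even moment m_{2n}^{2} := c_2^{-1} ∫_{-2}^{2} x^{2n} cos[(1/2) arcsin(x/2)] (4-x²)^{-1/4} dx satisfies m_{2n}^{2} = 2^{2n-1} Σ_{k=0}^{n} (-1)^k C(n,k) C(4k+2, 2k+1) / 2^{4k}. In particular m_0^2 = 1, m_2^2 = 3/2, m_4^2 = 31/8, m_6^2 = 187/16. -/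
/-- The total mass `c₂` of the (unnormalized) density of `ν₂`. -/
noncomputable def c2 : ℝ :=
  (2 : ℝ) ^ ((1 : ℝ) / 2) * Real.sqrt Real.pi * Real.Gamma (3 / 4) *
    Real.Gamma (5 / 4) / Real.Gamma (3 / 2)

/-- The normalized even moments `m_{2n}²` of the probability measure `ν₂`. -/
noncomputable def m2 (n : ℕ) : ℝ :=
  c2⁻¹ * ∫ x in (-2 : ℝ)..2, x ^ (2 * n) * Real.cos ((1 / 2) * Real.arcsin (x / 2)) *
    (4 - x ^ 2) ^ (-(1 / 4 : ℝ))

/-! The substitution `x = 2 sin ψ √(1 + cos² ψ)` maps `(-π/2, π/2)` increasingly onto `(-2, 2)`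
and makes every radical of the density rational in `cos ψ`: `4 - x² = 4 cos⁴ ψ` and
`cos (arcsin (x/2)) = cos² ψ`, hence `cos ((1/2) arcsin (x/2)) = √(1 + cos² ψ) / √2`, while
`dx = 4 cos³ ψ / √(1 + cos² ψ) dψ`. The weighted measure becomes `2 cos² ψ dψ`, so the `2n`-th
moment is `∫ (4 - 4 cos⁴ ψ)ⁿ 2 cos² ψ dψ`; expanding binomially and applying Wallis'
`∫ cos^(2m) = π C(2m, m) / 4^m` gives the sum, and the reflection formula gives `c₂ = π`. -/

open Real Set MeasureTheory intervalIntegral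

lemma c2_eq_pi : c2 = π := by
  have hΓ54 : Gamma (5 / 4) = Gamma (1 / 4) / 4 := by
    rw [show (5 / 4 : ℝ) = 1 / 4 + 1 by norm_num, Gamma_add_one (by norm_num)]; ring
  have hΓ32 : Gamma (3 / 2) = √π / 2 := by
    rw [show (3 / 2 : ℝ) = 1 / 2 + 1 by norm_num, Gamma_add_one (by norm_num),
      Gamma_one_half_eq]
    ring
  have hreflect : Gamma (3 / 4) * Gamma (1 / 4) = π * √2 := by
    have h := Gamma_mul_Gamma_one_sub (3 / 4)
    rw [show (1 : ℝ) - 3 / 4 = 1 / 4 by norm_num, show π * (3 / 4) = π - π / 4 by ring,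
      sin_pi_sub, sin_pi_div_four] at h
    rw [h]
    field_simp
    rw [sq_sqrt zero_le_two]
  rw [c2, ← sqrt_eq_rpow, hΓ54, hΓ32, mul_div_assoc', mul_assoc _ (Gamma _), hreflect]
  field_simp
  rw [sq_sqrt zero_le_two]
  norm_num

lemma prod_range_odd_div_even (m : ℕ) :
    ∏ i ∈ Finset.range m, (2 * (i : ℝ) + 1) / (2 * i + 2) = m.centralBinom / 4 ^ m := by
  induction m with
  | zero => simp
  | succ k ih =>
    have hrec : ((k + 1 : ℕ) : ℝ) * (k + 1).centralBinom = 2 * (2 * k + 1) * k.centralBinom :=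
      mod_cast Nat.succ_mul_centralBinom_succ k
    rw [Finset.prod_range_succ, ih, eq_div_iff (by positivity)]
    push_cast at hrec
    field_simp
    linear_combination (-2 : ℝ) * 4 ^ k * hrec

lemma integral_cos_pow_two_mul (m : ℕ) :
    ∫ x in -(π / 2)..π / 2, cos x ^ (2 * m) = π * m.centralBinom / 4 ^ m := by
  have hshift :=
    integral_comp_add_right (fun x => sin x ^ (2 * m)) (a := -(π / 2)) (b := π / 2) (π / 2)
  simp only [sin_add_pi_div_two, neg_add_cancel, add_halves] at hshift
  rw [hshift, integral_sin_pow_even, prod_range_odd_div_even, mul_div_assoc]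

noncomputable def momentSubst (ψ : ℝ) : ℝ := 2 * sin ψ * √(1 + cos ψ ^ 2)

lemma hasDerivAt_momentSubst (ψ : ℝ) :
    HasDerivAt momentSubst (4 * cos ψ ^ 3 / √(1 + cos ψ ^ 2)) ψ := by
  have hpos : 0 < 1 + cos ψ ^ 2 := by positivity
  have hsqrt : HasDerivAt (fun ψ => √(1 + cos ψ ^ 2))
      (2 * cos ψ * (-sin ψ) / (2 * √(1 + cos ψ ^ 2))) ψ := by
    refine HasDerivAt.sqrt ?_ hpos.ne'
    simpa using ((hasDerivAt_cos ψ).pow 2).const_add 1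
  refine (((hasDerivAt_sin ψ).const_mul 2).mul hsqrt).congr_deriv ?_
  have hsq : √(1 + cos ψ ^ 2) ^ 2 = 1 + cos ψ ^ 2 := sq_sqrt hpos.le
  field_simp
  linear_combination 2 * cos ψ * hsq - 2 * cos ψ * sin_sq_add_cos_sq ψ

lemma continuous_momentSubst : Continuous momentSubst :=
  continuous_iff_continuousAt.2 fun ψ => (hasDerivAt_momentSubst ψ).continuousAt

lemma strictMonoOn_momentSubst : StrictMonoOn momentSubst (Icc (-(π / 2)) (π / 2)) := by
  refine strictMonoOn_of_deriv_pos (convex_Icc _ _) continuous_momentSubst.continuousOn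
    fun ψ hψ => ?_
  rw [interior_Icc] at hψ
  rw [(hasDerivAt_momentSubst ψ).deriv]
  have := cos_pos_of_mem_Ioo hψ
  positivity

lemma momentSubst_image_Ioo : momentSubst '' Ioo (-(π / 2)) (π / 2) = Ioo (-2) 2 := by
  have hleft : momentSubst (-(π / 2)) = -2 := by simp [momentSubst]
  have hright : momentSubst (π / 2) = 2 := by simp [momentSubst]
  have h := continuous_momentSubst.continuousOn.image_Ioo_of_strictMonoOn
    (by linarith [pi_pos]) strictMonoOn_momentSubst
  rwa [hleft, hright] at h

lemma integral_neg_two_two_eq_integral_momentSubst (f : ℝ → ℝ) :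
    ∫ x in (-2)..2, f x =
      ∫ ψ in -(π / 2)..π / 2, 4 * cos ψ ^ 3 / √(1 + cos ψ ^ 2) * f (momentSubst ψ) := by
  rw [integral_of_le (by norm_num), integral_Ioc_eq_integral_Ioo,
    integral_of_le (by linarith [pi_pos]), integral_Ioc_eq_integral_Ioo,
    ← momentSubst_image_Ioo,
    integral_image_eq_integral_abs_deriv_smul measurableSet_Ioo
      (fun ψ _ => (hasDerivAt_momentSubst ψ).hasDerivWithinAt)
      (strictMonoOn_momentSubst.injOn.mono Ioo_subset_Icc_self)]
  refine setIntegral_congr_fun measurableSet_Ioo fun ψ hψ => ?_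
  have := cos_pos_of_mem_Ioo hψ
  rw [smul_eq_mul, abs_of_pos (by positivity)]

lemma momentSubst_sq (ψ : ℝ) : momentSubst ψ ^ 2 = 4 - 4 * cos ψ ^ 4 := by
  rw [momentSubst, mul_pow, mul_pow, sq_sqrt (by positivity), sin_sq]
  ring

lemma cos_half_arcsin_momentSubst (ψ : ℝ) :
    cos (1 / 2 * arcsin (momentSubst ψ / 2)) = √(1 + cos ψ ^ 2) / √2 := by
  have hcos_arcsin : cos (arcsin (momentSubst ψ / 2)) = cos ψ ^ 2 := by
    rw [cos_arcsin, div_pow, momentSubst_sq,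
      show 1 - (4 - 4 * cos ψ ^ 4) / 2 ^ 2 = (cos ψ ^ 2) ^ 2 by ring, sqrt_sq (by positivity)]
  rw [one_div_mul_eq_div,
    cos_half (by linarith [neg_pi_div_two_le_arcsin (momentSubst ψ / 2), pi_pos])
      (by linarith [arcsin_le_pi_div_two (momentSubst ψ / 2), pi_pos]),
    hcos_arcsin, sqrt_div' _ zero_le_two]

lemma four_sub_momentSubst_sq_rpow {ψ : ℝ} (hψ : 0 ≤ cos ψ) :
    (4 - momentSubst ψ ^ 2) ^ (-(1 / 4 : ℝ)) = (√2 * cos ψ)⁻¹ := by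
  have h : 4 - momentSubst ψ ^ 2 = (√2 * cos ψ) ^ (4 : ℝ) := by
    rw [momentSubst_sq, show (4 : ℝ) = (4 : ℕ) by norm_num, rpow_natCast, mul_pow,
      show √2 ^ 4 = (√2 ^ 2) ^ 2 by ring, sq_sqrt zero_le_two]
    ring
  rw [h, ← rpow_mul (by positivity)]
  norm_num [rpow_neg_one]

lemma momentSubst_deriv_mul_density (n : ℕ) {ψ : ℝ} (hψ : 0 ≤ cos ψ) :
    4 * cos ψ ^ 3 / √(1 + cos ψ ^ 2) * (momentSubst ψ ^ (2 * n) *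
      cos (1 / 2 * arcsin (momentSubst ψ / 2)) * (4 - momentSubst ψ ^ 2) ^ (-(1 / 4 : ℝ))) =
      (4 - 4 * cos ψ ^ 4) ^ n * (2 * cos ψ ^ 2) := by
  rw [four_sub_momentSubst_sq_rpow hψ, pow_mul, momentSubst_sq, cos_half_arcsin_momentSubst]
  rcases hψ.eq_or_lt with hzero | hpos
  · simp [← hzero]
  have hq : √(1 + cos ψ ^ 2) ≠ 0 := by positivity
  field_simp
  rw [sq_sqrt zero_le_two]
  ring

lemma integral_moment_eq (n : ℕ) :
    ∫ x in (-2 : ℝ)..2,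
        x ^ (2 * n) * cos (1 / 2 * arcsin (x / 2)) * (4 - x ^ 2) ^ (-(1 / 4 : ℝ)) =
      ∫ ψ in -(π / 2)..π / 2, (4 - 4 * cos ψ ^ 4) ^ n * (2 * cos ψ ^ 2) := by
  rw [integral_neg_two_two_eq_integral_momentSubst]
  refine integral_congr fun ψ hψ => momentSubst_deriv_mul_density n (cos_nonneg_of_mem_Icc ?_)
  rwa [uIcc_of_le (by linarith [pi_pos])] at hψ

lemma integral_four_sub_four_cos_pow_mul (n : ℕ) :
    ∫ ψ in -(π / 2)..π / 2, (4 - 4 * cos ψ ^ 4) ^ n * (2 * cos ψ ^ 2) =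
      ∑ k ∈ Finset.range (n + 1), 2 * 4 ^ n * ((-1) ^ k * n.choose k) *
        (π * (2 * k + 1).centralBinom / 4 ^ (2 * k + 1)) := by
  have hexpand : ∀ c : ℝ, (4 - 4 * c ^ 4) ^ n * (2 * c ^ 2) =
      ∑ k ∈ Finset.range (n + 1),
        2 * 4 ^ n * ((-1) ^ k * n.choose k) * c ^ (2 * (2 * k + 1)) := by
    intro c
    rw [show 4 - 4 * c ^ 4 = 4 * (-c ^ 4 + 1) by ring, mul_pow, add_pow, Finset.mul_sum,
      Finset.sum_mul]
    refine Finset.sum_congr rfl fun k _ => ?_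
    rw [neg_pow, one_pow]
    ring
  simp_rw [hexpand]
  rw [integral_finsetSum fun k _ => (by fun_prop : Continuous _).intervalIntegrable _ _]
  simp_rw [intervalIntegral.integral_const_mul, integral_cos_pow_two_mul]

lemma m2_eq_sum (n : ℕ) : m2 n = (2 : ℝ) ^ (2 * (n : ℤ) - 1) *
    ∑ k ∈ Finset.range (n + 1), (-1 : ℝ) ^ k * (n.choose k : ℝ) *
      ((4 * k + 2).choose (2 * k + 1) : ℝ) / 2 ^ (4 * k) := by
  rw [m2, c2_eq_pi, integral_moment_eq, integral_four_sub_four_cos_pow_mul, Finset.mul_sum,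
    Finset.mul_sum]
  refine Finset.sum_congr rfl fun k _ => ?_
  have hpow : (2 : ℝ) ^ (2 * (n : ℤ) - 1) = 4 ^ n / 2 := by
    rw [zpow_sub₀ two_ne_zero, zpow_mul, zpow_natCast, zpow_one]
    norm_num
  have hcentral : (2 * k + 1).centralBinom = (4 * k + 2).choose (2 * k + 1) := by
    rw [Nat.centralBinom, show 2 * (2 * k + 1) = 4 * k + 2 by ring]
  rw [hpow, hcentral, show (4 : ℝ) ^ (2 * k + 1) = 4 * 2 ^ (4 * k) by
    rw [pow_succ, mul_comm, pow_mul, pow_mul]; norm_num]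
  field_simp
  ring

theorem stmt_14 :
    (∀ n : ℕ, m2 n = (2 : ℝ) ^ (2 * (n : ℤ) - 1) *
      ∑ k ∈ Finset.range (n + 1), (-1 : ℝ) ^ k * (n.choose k : ℝ) *
        ((4 * k + 2).choose (2 * k + 1) : ℝ) / 2 ^ (4 * k)) ∧
    m2 0 = 1 ∧ m2 1 = 3 / 2 ∧ m2 2 = 31 / 8 ∧ m2 3 = 187 / 16 := by
  refine ⟨m2_eq_sum, ?_, ?_, ?_, ?_⟩ <;>
    simp [m2_eq_sum, Finset.sum_range_succ, Nat.choose] <;> norm_num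
end

section
/- For every real z with 0 < |z| < 1, (2z² + 1) / (z √(1+z²)) = 1/z + Σ_{k=0}^{∞} (-1)^k [2·C(2k,k) + C(2k,k)/(k+1)] · z^{2k+1} / 2^{2k+1}, where the series converges absolutely. Equivalently, the free cumulant generating function R_2(z) = K_2(z) - 1/z of the measure ν_2, where K_2(z) = (2z²+1)/(z√(1+z²)), has odd coefficients r_{2k+1} satisfying (-1)^k 2^{2k+1} r_{2k+1} = 2·C(2k,k) + C(2k,k)/(k+1), a weighted sum of the central binomial coefficient and the Catalan number; in particular r_0 = 0 and r_1 = 3/2. -/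
/-!
Put `t = -z²/4`, so that `1 - 4t = 1 + z²`. The binomial series of exponent `-1/2` gives
`F := ∑ C(2k,k) tᵏ = 1 / √(1 + z²)`. Since `C(2k,k)/(k+1) = 2 C(2k,k) - C(2k+2,k+1)/2`, the
`k`-th summand equals `2z · C(2k,k) tᵏ + z⁻¹ · C(2k+2,k+1) tᵏ⁺¹`, so the series sums to
`2zF + (F - 1)/z`, which is the claimed closed form minus `1/z`. Absolute convergence is free
over `ℝ`.
-/

open Nat

theorem ascPochhammer_eval_one_half_mul_four_pow (n : ℕ) :
    (ascPochhammer ℝ n).eval (1 / 2) * 4 ^ n = n ! * centralBinom n := by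
  induction n with
  | zero => simp
  | succ n ih =>
    have h : ((n + 1 : ℕ) : ℝ) * centralBinom (n + 1) = 2 * (2 * n + 1) * centralBinom n := by
      exact_mod_cast succ_mul_centralBinom_succ n
    rw [ascPochhammer_succ_eval, factorial_succ, pow_succ]
    push_cast at h ⊢
    linear_combination (4 * (1 / 2 + n)) * ih - (n ! : ℝ) * h

theorem multichoose_one_half (n : ℕ) :
    Ring.multichoose (1 / 2 : ℝ) n = centralBinom n / 4 ^ n := by
  have h := Ring.factorial_nsmul_multichoose_eq_ascPochhammer (1 / 2 : ℝ) n
  rw [Polynomial.ascPochhammer_smeval_eq_eval, nsmul_eq_mul] at h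
  rw [eq_div_iff (by positivity), ← mul_right_inj' (by positivity : (n ! : ℝ) ≠ 0)]
  linear_combination 4 ^ n * h + ascPochhammer_eval_one_half_mul_four_pow n

theorem hasSum_centralBinom_mul_pow {x : ℝ} (hx : |x| < 1 / 4) :
    HasSum (fun n => (centralBinom n : ℝ) * x ^ n) (√(1 - 4 * x))⁻¹ := by
  have h4x : 4 * x ∈ Metric.eball (0 : ℝ) 1 := by
    rw [Metric.mem_eball, edist_zero_right, ← ofReal_norm, ENNReal.ofReal_lt_one, Real.norm_eq_abs,
      abs_mul]
    norm_num
    linarith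
  have h := (Real.one_div_one_sub_rpow_hasFPowerSeriesOnBall_zero (1 / 2)).hasSum h4x
  rw [FormalMultilinearSeries.ofScalars_apply_eq'] at h
  have hcoeff (n : ℕ) :
      Ring.choose ((1 / 2 : ℝ) + n - 1) n • (4 * x) ^ n = centralBinom n * x ^ n := by
    rw [← Ring.multichoose_eq, multichoose_one_half, smul_eq_mul, mul_pow]
    field_simp
  rw [funext hcoeff, zero_add] at h
  rwa [Real.sqrt_eq_rpow, inv_eq_one_div]

theorem centralBinom_div_succ (n : ℕ) :
    (centralBinom n : ℝ) / (n + 1) = 2 * centralBinom n - centralBinom (n + 1) / 2 := by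
  have h : ((n + 1 : ℕ) : ℝ) * centralBinom (n + 1) = 2 * (2 * n + 1) * centralBinom n := by
    exact_mod_cast succ_mul_centralBinom_succ n
  push_cast at h
  field_simp
  linear_combination h

theorem summand_eq_centralBinom_terms {z : ℝ} (hz : z ≠ 0) (k : ℕ) :
    (-1 : ℝ) ^ k * (2 * ((2 * k).choose k : ℝ) + ((2 * k).choose k : ℝ) / ((k : ℝ) + 1)) *
        z ^ (2 * k + 1) / 2 ^ (2 * k + 1) =
      2 * z * (centralBinom k * (-z ^ 2 / 4) ^ k) +
        z⁻¹ * (centralBinom (k + 1) * (-z ^ 2 / 4) ^ (k + 1)) := by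
  have hpow (j : ℕ) : (-z ^ 2 / 4) ^ j = (-1) ^ j * z ^ (2 * j) / 4 ^ j := by
    rw [div_pow, neg_pow, pow_mul]
  rw [← centralBinom_eq_two_mul_choose, centralBinom_div_succ, hpow, hpow, pow_succ 2, pow_mul 2,
    show (2 : ℝ) ^ 2 = 4 by norm_num]
  field_simp
  ring

theorem stmt_19 (z : ℝ) (hz0 : 0 < |z|) (hz1 : |z| < 1) :
    Summable (fun k : ℕ =>
      |(-1 : ℝ) ^ k * (2 * ((2 * k).choose k : ℝ) + ((2 * k).choose k : ℝ) / ((k : ℝ) + 1)) *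
        z ^ (2 * k + 1) / 2 ^ (2 * k + 1)|) ∧
    (2 * z ^ 2 + 1) / (z * Real.sqrt (1 + z ^ 2)) =
      1 / z + ∑' k : ℕ,
        (-1 : ℝ) ^ k * (2 * ((2 * k).choose k : ℝ) + ((2 * k).choose k : ℝ) / ((k : ℝ) + 1)) *
          z ^ (2 * k + 1) / 2 ^ (2 * k + 1) := by
  have hz : z ≠ 0 := abs_pos.mp hz0
  have ht : |-z ^ 2 / 4| < 1 / 4 := by
    rw [abs_div, abs_neg, abs_pow, abs_of_pos (four_pos : (0 : ℝ) < 4)]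
    gcongr
    nlinarith
  have hF := hasSum_centralBinom_mul_pow ht
  have hF_shift := (hasSum_nat_add_iff' 1).mpr hF
  simp only [Finset.range_one, Finset.sum_singleton, centralBinom_zero, pow_zero, mul_one,
    cast_one] at hF_shift
  have hsum := ((hF.mul_left (2 * z)).add (hF_shift.mul_left z⁻¹)).congr_fun
    (summand_eq_centralBinom_terms hz)
  refine ⟨hsum.summable.abs, ?_⟩
  rw [hsum.tsum_eq, show 1 - 4 * (-z ^ 2 / 4) = 1 + z ^ 2 by ring]
  have hs : Real.sqrt (1 + z ^ 2) ≠ 0 := by positivity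
  field_simp
  ring
end
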